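/- arXiv:math-ph/0310059 — 3 statements merged into one kernel-verified Lean document; each statement's English description precedes it below -/
import Mathlib

section
/- Let A ≥ 1 and B ≥ 1. Then λ(∅) = 2, and for every nonempty X ⊆ {1,…,N} with X:m one has λ(X) ≥ 6. -/
open Finset
open scoped symmDiff

/-!
Put `Y = X Δ M`. Then `1 ∈ Y ↔ 1 ∉ X`, `N ∈ Y ↔ N ∈ X`, `|Y| = m`, and `Y ≠ M` since `X ≠ ∅`.
Along any increasing chain `1 = x₀ < x₁ < ⋯ < x_k ≤ N` whose consecutive points differ in
membership in `Y`, each step contains its own bond of `∂Y`. Such a chain with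
`1 + [1 ∈ Y] + [N ∉ Y]` steps always exists: `1, N` if `1 ∉ Y ∋ N`; `1, y, N` with `y ∈ Y` if
`1, N ∉ Y`; `1, z, N` with `z ∉ Y` if `1, N ∈ Y` (possible as `|Y| = m < N`); and `1, p, q, N`
with `p ∈ M \ Y`, `q ∈ Y \ M` if `1 ∈ Y ∌ N` (possible as `Y ≠ M`, `|Y| = |M|`, and `p ≤ m < q`).
Hence `λ(X) ≥ 2 (1 + [1 ∉ X] + [N ∉ X]) + 2A [1 ∈ X] + 2B [N ∈ X] ≥ 6`.
-/

/-- The set of bonds `⟨j,j+1⟩` (labelled by `j ∈ {1,…,N-1}`) such that exactly one of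
`j`, `j+1` belongs to `Y`. -/
def bdry (N : ℕ) (Y : Finset ℕ) : Finset ℕ :=
  (Finset.Icc 1 (N - 1)).filter fun j => (j ∈ Y ∧ j + 1 ∉ Y) ∨ (j ∉ Y ∧ j + 1 ∈ Y)

/-- `λ(X) = 2·|∂(X Δ M)| + 2A·[1 ∈ X] + 2B·[N ∈ X]`, where `M = {1,…,m}`. -/
def lam (N m : ℕ) (A B : ℝ) (X : Finset ℕ) : ℝ :=
  2 * (bdry N (X ∆ Finset.Icc 1 m)).card
    + 2 * A * (if 1 ∈ X then 1 else 0)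
    + 2 * B * (if N ∈ X then 1 else 0)

theorem mem_bdry {N j : ℕ} {Y : Finset ℕ} :
    j ∈ bdry N Y ↔ 1 ≤ j ∧ j < N ∧ (j ∈ Y ↔ j + 1 ∉ Y) := by
  simp only [bdry, mem_filter, mem_Icc]
  constructor
  · rintro ⟨⟨h₁, h₂⟩, h₃⟩
    exact ⟨h₁, by omega, by tauto⟩
  · rintro ⟨h₁, h₂, h₃⟩
    exact ⟨⟨h₁, by omega⟩, by tauto⟩

theorem bdry_Icc_one {N m : ℕ} (hm : 0 < m) (hmN : m < N) : bdry N (Icc 1 m) = {m} := by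
  ext j
  simp only [mem_bdry, mem_Icc, mem_singleton]
  omega

theorem exists_mem_bdry_of_mem_iff_notMem {N a b : ℕ} {Y : Finset ℕ} (ha : 1 ≤ a) (hab : a < b)
    (hbN : b ≤ N) (hY : a ∈ Y ↔ b ∉ Y) : ∃ j ∈ bdry N Y, a ≤ j ∧ j < b := by
  induction b, hab using Nat.le_induction with
  | base => exact ⟨a, mem_bdry.2 ⟨ha, by omega, hY⟩, le_rfl, by omega⟩
  | succ b hab ih =>
    by_cases hb : a ∈ Y ↔ b ∉ Y
    · obtain ⟨j, hj, haj, hjb⟩ := ih (by omega) hb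
      exact ⟨j, hj, haj, by omega⟩
    · exact ⟨b, mem_bdry.2 ⟨by omega, by omega, by tauto⟩, by omega, by omega⟩

-- Restricting to bonds `≥ a` keeps the bonds found for successive steps of the chain distinct.
theorem length_le_card_filter_bdry {N : ℕ} {Y : Finset ℕ} :
    ∀ {a : ℕ} {l : List ℕ}, (a :: l).IsChain (fun x y => x < y ∧ (x ∈ Y ↔ y ∉ Y)) →
      1 ≤ a → (∀ x ∈ l, x ≤ N) → l.length ≤ ((bdry N Y).filter (a ≤ ·)).card
  | _, [], _, _, _ => by simp
  | a, b :: l, hchain, ha, hN => by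
    rw [List.isChain_cons_cons] at hchain
    obtain ⟨⟨hab, hY⟩, hchain⟩ := hchain
    obtain ⟨j, hj, haj, hjb⟩ :=
      exists_mem_bdry_of_mem_iff_notMem ha hab (hN b List.mem_cons_self) hY
    have ih := length_le_card_filter_bdry hchain (by omega) fun x hx ↦
      hN x (List.mem_cons_of_mem _ hx)
    have hsub : insert j ((bdry N Y).filter (b ≤ ·)) ⊆ (bdry N Y).filter (a ≤ ·) := by
      intro x hx
      simp only [mem_insert, mem_filter] at hx ⊢
      rcases hx with rfl | ⟨hx, hbx⟩
      · exact ⟨hj, haj⟩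
      · exact ⟨hx, by omega⟩
    have hj' : j ∉ (bdry N Y).filter (b ≤ ·) := by simp [hjb]
    calc l.length + 1 ≤ (insert j ((bdry N Y).filter (b ≤ ·))).card := by
          rw [card_insert_of_notMem hj']; omega
      _ ≤ _ := card_le_card hsub

theorem length_le_card_bdry {N a : ℕ} {Y : Finset ℕ} {l : List ℕ}
    (hchain : (a :: l).IsChain (fun x y => x < y ∧ (x ∈ Y ↔ y ∉ Y)))
    (ha : 1 ≤ a) (hN : ∀ x ∈ l, x ≤ N) : l.length ≤ (bdry N Y).card :=
  (length_le_card_filter_bdry hchain ha hN).trans (card_filter_le _ _)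

theorem le_card_bdry_of_ne_Icc {N m : ℕ} {Y : Finset ℕ} (hmN : m < N) (hY : Y ⊆ Icc 1 N) (hcard : #Y = m)
    (hYM : Y ≠ Icc 1 m) :
    1 + (if 1 ∈ Y then 1 else 0) + (if N ∈ Y then 0 else 1) ≤ #(bdry N Y) := by
  have hm : 0 < m := Nat.pos_of_ne_zero fun hm0 ↦ hYM (by simpa [hm0] using hcard)
  have hYN : ∀ x ∈ Y, 1 ≤ x ∧ x ≤ N := fun x hx ↦ mem_Icc.1 (hY hx)
  have chain (l : List ℕ) (hl : (1 :: l).IsChain (fun x y => x < y ∧ (x ∈ Y ↔ y ∉ Y)))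
      (hlN : ∀ x ∈ l, x ≤ N) : l.length ≤ #(bdry N Y) :=
    length_le_card_bdry hl le_rfl hlN
  by_cases h1 : 1 ∈ Y <;> by_cases hN : N ∈ Y <;> simp only [h1, hN, if_true, if_false]
  · obtain ⟨z, hz, hzY⟩ := exists_mem_notMem_of_card_lt_card (s := Y) (t := Icc 1 N)
      (by simpa [hcard] using hmN)
    have hz1N := mem_Icc.1 hz
    have hz1 : 1 ≠ z := by rintro rfl; exact hzY h1
    have hzN : z ≠ N := by rintro rfl; exact hzY hN
    simpa using chain [z, N] (by simp [hzY, h1, hN]; omega) (by simp; omega)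
  · have hMcard : #(Icc 1 m) = m := by simp
    obtain ⟨p, hp, hpY⟩ := not_subset.1 fun h ↦ hYM (eq_of_subset_of_card_le h (by omega)).symm
    obtain ⟨q, hqY, hq⟩ := not_subset.1 fun h ↦ hYM (eq_of_subset_of_card_le h (by omega))
    have hp1m := mem_Icc.1 hp
    have hq1N := hYN q hqY
    have hp1 : 1 ≠ p := by rintro rfl; exact hpY h1
    have hqN : q ≠ N := by rintro rfl; exact hN hqY
    have hmq : m < q := by simp only [mem_Icc, not_and, not_le] at hq; omega
    simpa using chain [p, q, N] (by simp [h1, hN, hpY, hqY]; omega) (by simp; omega)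
  · simpa using chain [N] (by simp [h1, hN]; omega) (by simp)
  · obtain ⟨y, hy⟩ := card_pos.1 (hcard ▸ hm)
    have hy1N := hYN y hy
    have hy1 : 1 ≠ y := by rintro rfl; exact h1 hy
    have hyN : y ≠ N := by rintro rfl; exact hN hy
    simpa using chain [y, N] (by simp [h1, hN, hy]; omega) (by simp; omega)

theorem lam_empty_eq_two_and_lam_ge_six (N m : ℕ) (hm : 0 < m) (hmN : m < N)
    (A B : ℝ) (hA : 1 ≤ A) (hB : 1 ≤ B) :
    lam N m A B ∅ = 2 ∧
      ∀ X : Finset ℕ, X ⊆ Finset.Icc 1 N → X ≠ ∅ →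
        (X ∆ Finset.Icc 1 m).card = m → 6 ≤ lam N m A B X := by
  refine ⟨?_, fun X hX hXne hcard ↦ ?_⟩
  · rw [lam, ← bot_eq_empty, bot_symmDiff, bdry_Icc_one hm hmN]
    simp
  have hYN : X ∆ Icc 1 m ⊆ Icc 1 N :=
    symmDiff_subset_union.trans (union_subset hX (Icc_subset_Icc_right hmN.le))
  have hYM : X ∆ Icc 1 m ≠ Icc 1 m := by simpa [symmDiff_eq_right] using hXne
  have h1M : 1 ∈ Icc 1 m := by simp; omega
  have hNM : N ∉ Icc 1 m := by simp; omega
  have key : ((1 + (if 1 ∈ X then 0 else 1) + (if N ∈ X then 0 else 1) : ℕ) : ℝ)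
      ≤ #(bdry N (X ∆ Icc 1 m)) := by
    have := le_card_bdry_of_ne_Icc hmN hYN hcard hYM
    simp only [mem_symmDiff, h1M, hNM] at this
    exact_mod_cast (by simpa [apply_ite] using this)
  unfold lam
  split_ifs at key ⊢ <;> push_cast at key <;> linarith
end

section
/- Assume A ≥ 1, B ≥ 1 and 2 ≤ m ≤ N−2. Let 0 denote the element with E = 0 and e(X) = 0 for all nonempty X with X:m. Then F(0) has E-component 0, e-component equal to −ε/2 at X = {m, m+1} and 0 at every other X, and ‖F(0)‖ = 2|ε|. -/
open Finset
open scoped symmDiff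

/-- The sets `X ⊆ {1,…,N}` satisfying `X:m`, i.e. `|X Δ M| = m` where `M = {1,…,m}`. -/
def sector (N m : ℕ) : Finset (Finset ℕ) :=
  (Finset.Icc 1 N).powerset.filter fun X => (X ∆ Finset.Icc 1 m).card = m

/-- Extend a family of coefficients by setting `e(∅) := 1`. -/
def kext (e : Finset ℕ → ℝ) : Finset ℕ → ℝ := fun X => if X = ∅ then 1 else e X

/-- The kink fixed-point map `F(E, e) = (E′, e′)`, where `E′ = 2ε·e({m,m+1})` and, for
nonempty `X` with `X:m`,
`e′(X) = (λ(X)−2)⁻¹·[−2ε·Σ_{⟨j,j+1⟩ ∈ ∂(X Δ M)} e(X Δ {j,j+1}) + E·e(X)]`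
(with the convention `e(∅) = 1`); all other components are set to `0`. -/
noncomputable def kinkF (N m : ℕ) (ε A B : ℝ) (p : ℝ × (Finset ℕ → ℝ)) : ℝ × (Finset ℕ → ℝ) :=
  (2 * ε * p.2 {m, m + 1},
    fun X =>
      if X ∈ sector N m ∧ X ≠ ∅ then
        (lam N m A B X - 2)⁻¹ *
          (-2 * ε * ∑ j ∈ bdry N (X ∆ Finset.Icc 1 m), kext p.2 (X ∆ {j, j + 1})
            + p.1 * p.2 X)
      else 0)

/-- The norm `‖(E, e)‖ = |E| + Σ_{X:m, X ≠ ∅} (λ(X)−2)·|e(X)|`. -/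
def knorm (N m : ℕ) (A B : ℝ) (p : ℝ × (Finset ℕ → ℝ)) : ℝ :=
  |p.1| + ∑ X ∈ (sector N m).filter (· ≠ ∅), (lam N m A B X - 2) * |p.2 X|

/-! At the origin only the convention `e(∅) = 1` contributes, so `e′(X)` counts the boundary
bonds `⟨j,j+1⟩` with `X = {j, j+1}`. A pair `{j, j+1}` satisfies `X:m` only for `j = m`, and for
`X = {m, m+1}` exactly one bond qualifies, while `X Δ M = {1,…,m-1} ∪ {m+1}` has three boundary
bonds and `X` avoids both ends of the chain, so `λ(X) = 6` and `e′(X) = -2ε/4`. -/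

lemma symmDiff_Icc_of_pair {m : ℕ} (hm : 1 ≤ m) :
    ({m, m + 1} : Finset ℕ) ∆ Icc 1 m = insert (m + 1) (Icc 1 (m - 1)) := by
  ext j
  simp only [mem_symmDiff, mem_insert, mem_singleton, mem_Icc]
  omega

lemma eq_of_card_pair_symmDiff_Icc {m j : ℕ} (hj : 1 ≤ j)
    (h : (({j, j + 1} : Finset ℕ) ∆ Icc 1 m).card = m) : j = m := by
  rcases lt_trichotomy j m with hlt | rfl | hgt
  · have hsub : ({j, j + 1} : Finset ℕ) ⊆ Icc 1 m := by
      intro k hk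
      simp only [mem_insert, mem_singleton, mem_Icc] at hk ⊢
      omega
    rw [symmDiff_of_le hsub, card_sdiff_of_subset hsub,
      card_pair (by omega), Nat.card_Icc] at h
    omega
  · rfl
  · have hdisj : Disjoint ({j, j + 1} : Finset ℕ) (Icc 1 m) := by
      simp only [disjoint_insert_left, disjoint_singleton_left, mem_Icc]
      omega
    rw [hdisj.symmDiff_eq_sup, sup_eq_union, card_union_of_disjoint hdisj,
      card_pair (by omega), Nat.card_Icc] at h
    omega

lemma pair_mem_sector {N m : ℕ} (hm : 1 ≤ m) (hmN : m + 1 ≤ N) :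
    ({m, m + 1} : Finset ℕ) ∈ sector N m := by
  refine mem_filter.2 ⟨mem_powerset.2 fun k hk => ?_, ?_⟩
  · simp only [mem_insert, mem_singleton, mem_Icc] at hk ⊢
    omega
  · rw [symmDiff_Icc_of_pair hm, card_insert_of_notMem (by simp), Nat.card_Icc]
    omega

lemma bdry_pair_symmDiff_Icc {N m : ℕ} (hm : 2 ≤ m) (hmN : m + 2 ≤ N) :
    bdry N (({m, m + 1} : Finset ℕ) ∆ Icc 1 m) = {m - 1, m, m + 1} := by
  rw [symmDiff_Icc_of_pair (by omega)]
  ext j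
  simp only [bdry, mem_filter, mem_insert, mem_singleton, mem_Icc]
  omega

lemma lam_pair {N m : ℕ} (A B : ℝ) (hm : 2 ≤ m) (hmN : m + 2 ≤ N) :
    lam N m A B {m, m + 1} = 6 := by
  have hcard : ({m - 1, m, m + 1} : Finset ℕ).card = 3 := by
    rw [card_insert_of_notMem (by simp only [mem_insert, mem_singleton]; omega),
      card_pair (by omega)]
  rw [lam, bdry_pair_symmDiff_Icc hm hmN, hcard, if_neg (by simp; omega),
    if_neg (by simp; omega)]
  norm_num

lemma kinkF_zero_fst (N m : ℕ) (ε A B : ℝ) : (kinkF N m ε A B (0, fun _ => 0)).1 = 0 := by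
  simp [kinkF]

lemma kinkF_zero_snd (N m : ℕ) (ε A B : ℝ) (X : Finset ℕ) :
    (kinkF N m ε A B (0, fun _ => 0)).2 X =
      if X ∈ sector N m ∧ X ≠ ∅ then
        (lam N m A B X - 2)⁻¹ *
          (-2 * ε * ((bdry N (X ∆ Icc 1 m)).filter fun j => X = {j, j + 1}).card)
      else 0 := by
  simp [kinkF, kext, sum_boole]

lemma kinkF_zero_snd_of_ne_pair {N m : ℕ} (ε A B : ℝ) {X : Finset ℕ}
    (hX : X ≠ {m, m + 1}) : (kinkF N m ε A B (0, fun _ => 0)).2 X = 0 := by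
  rw [kinkF_zero_snd]
  split_ifs with hXmem
  · rw [filter_eq_empty_iff.2, card_empty, Nat.cast_zero, mul_zero, mul_zero]
    rintro j hj rfl
    have hj1 : 1 ≤ j := (mem_Icc.1 (mem_filter.1 hj).1).1
    exact hX (by rw [eq_of_card_pair_symmDiff_Icc hj1 (mem_filter.1 hXmem.1).2])
  · rfl

lemma kinkF_zero_snd_pair {N m : ℕ} (ε A B : ℝ) (hm : 2 ≤ m) (hmN : m + 2 ≤ N) :
    (kinkF N m ε A B (0, fun _ => 0)).2 {m, m + 1} = -ε / 2 := by
  have hbonds : ((bdry N (({m, m + 1} : Finset ℕ) ∆ Icc 1 m)).filter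
      fun j => ({m, m + 1} : Finset ℕ) = {j, j + 1}) = {m} := by
    ext j
    rw [mem_filter, mem_singleton, bdry_pair_symmDiff_Icc hm hmN]
    constructor
    · rintro ⟨-, h⟩
      have hj : j ∈ ({m, m + 1} : Finset ℕ) := h ▸ mem_insert_self j {j + 1}
      have hm' : m ∈ ({j, j + 1} : Finset ℕ) := h ▸ mem_insert_self m {m + 1}
      simp only [mem_insert, mem_singleton] at hj hm'
      omega
    · rintro rfl
      simp
  rw [kinkF_zero_snd, if_pos ⟨pair_mem_sector (by omega) (by omega), by simp⟩, lam_pair A B hm hmN,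
    hbonds, card_singleton]
  ring

theorem kinkF_zero_general (N m : ℕ) (ε A B : ℝ)
    (hm : 2 ≤ m) (hmN : m + 2 ≤ N) :
    (kinkF N m ε A B (0, fun _ => 0)).1 = 0 ∧
      (kinkF N m ε A B (0, fun _ => 0)).2 {m, m + 1} = -ε / 2 ∧
      (∀ X : Finset ℕ, X ≠ {m, m + 1} → (kinkF N m ε A B (0, fun _ => 0)).2 X = 0) ∧
      knorm N m A B (kinkF N m ε A B (0, fun _ => 0)) = 2 * |ε| := by
  refine ⟨kinkF_zero_fst N m ε A B, kinkF_zero_snd_pair ε A B hm hmN,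
    fun X hX => kinkF_zero_snd_of_ne_pair ε A B hX, ?_⟩
  have hpair : ({m, m + 1} : Finset ℕ) ∈ (sector N m).filter (· ≠ ∅) :=
    mem_filter.2 ⟨pair_mem_sector (by omega) (by omega), by simp⟩
  rw [knorm, kinkF_zero_fst, abs_zero, zero_add,
    sum_eq_single_of_mem _ hpair fun X _ hX => by
      rw [kinkF_zero_snd_of_ne_pair ε A B hX, abs_zero, mul_zero],
    kinkF_zero_snd_pair ε A B hm hmN, lam_pair A B hm hmN, abs_div, abs_neg]
  norm_num
  ring

theorem kinkF_zero (N m : ℕ) (ε A B : ℝ) (hA : 1 ≤ A) (hB : 1 ≤ B)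
    (hm : 2 ≤ m) (hmN : m + 2 ≤ N) :
    (kinkF N m ε A B (0, fun _ => 0)).1 = 0 ∧
      (kinkF N m ε A B (0, fun _ => 0)).2 {m, m + 1} = -ε / 2 ∧
      (∀ X : Finset ℕ, X ≠ {m, m + 1} → (kinkF N m ε A B (0, fun _ => 0)).2 X = 0) ∧
      knorm N m A B (kinkF N m ε A B (0, fun _ => 0)) = 2 * |ε| :=
  kinkF_zero_general N m ε A B hm hmN
end

section
/- Assume A ≥ 1 and B ≥ 1. Then for all pairs (E, e) and (E′, e′) of finite norm, ‖F(E, e) − F(E′, e′)‖ ≤ (3|ε| + (1/4)·max{‖(E, e)‖, ‖(E′, e′)‖}) · ‖(E, e) − (E′, e′)‖. Consequently, for δ > 0 and ε with 3|ε| + δ/4 < 1, F is a contraction on the closed ball of radius δ about the origin. -/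
open Finset
open scoped symmDiff

/-!
Write `Y = X Δ M` and `w(X) = λ(X) − 2`. Extend `Y ⊆ {1,…,N}` by an occupied site `0` and an
empty site `N + 1`; then `|∂Y| + [1 ∈ X] + [N ∈ X]` is the number of domain walls of `Y`. If
`X ≠ ∅`, then `Y ≠ M` and `|Y| = m` give sites `c ∈ M \ Y` and `a ∈ Y \ M`, and the pattern
in, out, in, out at `0 < c < a < N + 1` forces three walls. With `A, B ≥ 1` this gives
`w(X) ≥ 4` and `w(X) ≥ |∂Y|`. The first bound turns the quadratic term `E·e(X)` into the factor
`1/4`; the second, together with the involution `(X, j) ↦ (X Δ {j, j+1}, j)` of the hopping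
pairs, bounds the hopping term by `2|ε|·‖e‖`.
-/

lemma Nat.exists_not_iff_succ_of_not_iff {P : ℕ → Prop} {a b : ℕ} (hab : a ≤ b)
    (h : ¬(P a ↔ P b)) : ∃ j, a ≤ j ∧ j < b ∧ ¬(P j ↔ P (j + 1)) := by
  induction b, hab using Nat.le_induction with
  | base => exact absurd Iff.rfl h
  | succ b hab ih =>
    by_cases hb : P a ↔ P b
    · exact ⟨b, hab, b.lt_succ_self, fun h' => h (hb.trans h')⟩
    · obtain ⟨j, hj, hjb, hflip⟩ := ih hb
      exact ⟨j, hj, by omega, hflip⟩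

lemma Finset.card_symmDiff_pair_of_mem_of_notMem {α : Type*} [DecidableEq α] {Y : Finset α}
    {a b : α} (ha : a ∈ Y) (hb : b ∉ Y) : (Y ∆ {a, b}).card = Y.card := by
  have : Y ∆ {a, b} = insert b (Y.erase a) := by
    ext k
    simp only [mem_symmDiff, mem_insert, mem_singleton, mem_erase]
    grind
  rw [this, card_insert_of_notMem (fun h => hb (mem_of_mem_erase h)), card_erase_add_one ha]

section Bdry
variable {N m j : ℕ} {Y : Finset ℕ}

lemma mem_bdry_iff : j ∈ bdry N Y ↔ (1 ≤ j ∧ j ≤ N - 1) ∧ ¬(j ∈ Y ↔ j + 1 ∈ Y) := by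
  simp only [bdry, mem_filter, mem_Icc]
  tauto

/-- The bonds `⟨j, j+1⟩`, `0 ≤ j ≤ N`, across which `Y ∪ {0}` changes, for `Y ⊆ {1,…,N}`. -/
def walls (N : ℕ) (Y : Finset ℕ) : Finset ℕ :=
  bdry N Y ∪ (if 1 ∈ Y then ∅ else {0}) ∪ (if N ∈ Y then {N} else ∅)

lemma card_walls_le :
    (walls N Y).card ≤ (bdry N Y).card + (if 1 ∈ Y then 0 else 1) + (if N ∈ Y then 1 else 0) :=
  calc (walls N Y).card ≤ (bdry N Y).card + (if 1 ∈ Y then ∅ else {0} : Finset ℕ).card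
        + (if N ∈ Y then {N} else ∅ : Finset ℕ).card :=
        (card_union_le _ _).trans (by gcongr; exact card_union_le _ _)
    _ = _ := by split_ifs <;> simp

lemma mem_walls_of_not_iff (hY : Y ⊆ Icc 1 N) (hjN : j ≤ N)
    (hflip : ¬((j = 0 ∨ j ∈ Y) ↔ (j + 1 = 0 ∨ j + 1 ∈ Y))) : j ∈ walls N Y := by
  simp only [walls, mem_union, mem_bdry_iff]
  by_cases h0 : j = 0
  · subst h0
    have h1 : 1 ∉ Y := by simpa using hflip
    simp [h1]
  by_cases hN : j = N
  · subst hN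
    have : j + 1 ∉ Y := fun h => absurd (mem_Icc.mp (hY h)).2 (by omega)
    have hN : j ∈ Y := by simpa [this, h0] using hflip
    simp [hN]
  · exact Or.inl (Or.inl ⟨⟨by omega, by omega⟩, by simpa [h0] using hflip⟩)

lemma three_le_card_bdry_add_ite (hY : Y ⊆ Icc 1 N) (hcard : Y.card = m) (hYM : Y ≠ Icc 1 m) :
    3 ≤ (bdry N Y).card + (if 1 ∈ Y then 0 else 1) + (if N ∈ Y then 1 else 0) := by
  have hMcard : (Icc 1 m).card = m := by simp
  obtain ⟨a, haY, haM⟩ := not_subset.mp fun h : Y ⊆ Icc 1 m =>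
    hYM (eq_of_subset_of_card_le h (by omega))
  obtain ⟨c, hcM, hcY⟩ := not_subset.mp fun h : Icc 1 m ⊆ Y =>
    hYM (eq_of_subset_of_card_le h (by omega)).symm
  have ha := hY haY
  simp only [mem_Icc] at ha haM hcM
  let P : ℕ → Prop := fun k => k = 0 ∨ k ∈ Y
  have hP0 : P 0 := Or.inl rfl
  have hPc : ¬P c := by rintro (h | h) <;> [omega; exact hcY h]
  have hPa : P a := Or.inr haY
  have hPN : ¬P (N + 1) := by
    rintro (h | h) <;> [omega; exact absurd (mem_Icc.mp (hY h)).2 (by omega)]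
  obtain ⟨j₁, -, hj₁, hflip₁⟩ :=
    Nat.exists_not_iff_succ_of_not_iff (Nat.zero_le c) fun h => hPc (h.mp hP0)
  obtain ⟨j₂, hj₂, hj₂', hflip₂⟩ :=
    Nat.exists_not_iff_succ_of_not_iff (by omega : c ≤ a) fun h => hPc (h.mpr hPa)
  obtain ⟨j₃, hj₃, hj₃', hflip₃⟩ :=
    Nat.exists_not_iff_succ_of_not_iff (by omega : a ≤ N + 1) fun h => hPN (h.mp hPa)
  calc 3 = ({j₁, j₂, j₃} : Finset ℕ).card := by
        rw [card_insert_of_notMem (by simp; omega), card_pair (by omega)]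
    _ ≤ (walls N Y).card := card_le_card (by
        intro j hj
        simp only [mem_insert, mem_singleton] at hj
        rcases hj with rfl | rfl | rfl
        exacts [mem_walls_of_not_iff hY (by omega) hflip₁,
          mem_walls_of_not_iff hY (by omega) hflip₂, mem_walls_of_not_iff hY (by omega) hflip₃])
    _ ≤ _ := card_walls_le

lemma mem_bdry_symmDiff_pair (hj : j ∈ bdry N Y) : j ∈ bdry N (Y ∆ {j, j + 1}) := by
  obtain ⟨hjN, hflip⟩ := mem_bdry_iff.mp hj
  refine mem_bdry_iff.mpr ⟨hjN, ?_⟩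
  have hj : j ∈ Y ∆ {j, j + 1} ↔ j ∉ Y := by simp [mem_symmDiff]
  have hj₁ : j + 1 ∈ Y ∆ {j, j + 1} ↔ j + 1 ∉ Y := by simp [mem_symmDiff]
  tauto

lemma card_symmDiff_pair_of_mem_bdry (hj : j ∈ bdry N Y) : (Y ∆ {j, j + 1}).card = Y.card := by
  obtain ⟨-, hflip⟩ := mem_bdry_iff.mp hj
  by_cases h : j ∈ Y
  · exact card_symmDiff_pair_of_mem_of_notMem h (by tauto)
  · rw [pair_comm]
    exact card_symmDiff_pair_of_mem_of_notMem (by tauto) h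

end Bdry

section Sector
variable {N m j : ℕ} {A B : ℝ} {X : Finset ℕ}

def nonemptySector (N m : ℕ) : Finset (Finset ℕ) := (sector N m).filter (· ≠ ∅)

lemma mem_sector_iff : X ∈ sector N m ↔ X ⊆ Icc 1 N ∧ (X ∆ Icc 1 m).card = m := by
  simp [sector]

lemma mem_nonemptySector_iff : X ∈ nonemptySector N m ↔ X ∈ sector N m ∧ X ≠ ∅ :=
  mem_filter

lemma symmDiff_Icc_subset (hmN : m < N) (hX : X ∈ sector N m) : X ∆ Icc 1 m ⊆ Icc 1 N :=
  symmDiff_le (le_sup_of_le_right (mem_sector_iff.mp hX).1)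
    (le_sup_of_le_right (Icc_subset_Icc_right hmN.le))

lemma symmDiff_pair_mem_sector (hX : X ∈ sector N m) (hj : j ∈ bdry N (X ∆ Icc 1 m)) :
    X ∆ {j, j + 1} ∈ sector N m := by
  obtain ⟨hXN, hcard⟩ := mem_sector_iff.mp hX
  obtain ⟨hjN, -⟩ := mem_bdry_iff.mp hj
  refine mem_sector_iff.mpr ⟨symmDiff_le (le_sup_of_le_right hXN) ?_, ?_⟩
  · intro k hk
    simp only [mem_insert, mem_singleton] at hk
    simp only [sup_eq_union, mem_union, mem_Icc]
    omega
  · rw [symmDiff_right_comm, card_symmDiff_pair_of_mem_bdry hj, hcard]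

lemma mem_bdry_symmDiff_pair_symmDiff_Icc (hj : j ∈ bdry N (X ∆ Icc 1 m)) :
    j ∈ bdry N (X ∆ {j, j + 1} ∆ Icc 1 m) := by
  rw [symmDiff_right_comm]
  exact mem_bdry_symmDiff_pair hj

lemma pair_mem_nonemptySector (hm : 0 < m) (hmN : m < N) :
    ({m, m + 1} : Finset ℕ) ∈ nonemptySector N m := by
  refine mem_nonemptySector_iff.mpr ⟨mem_sector_iff.mpr ⟨?_, ?_⟩, insert_ne_empty _ _⟩
  · intro k hk
    simp only [mem_insert, mem_singleton] at hk
    rw [mem_Icc]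
    omega
  · have h : ({m, m + 1} : Finset ℕ) ∆ Icc 1 m = insert (m + 1) (Icc 1 (m - 1)) := by
      ext k
      simp only [mem_symmDiff, mem_insert, mem_singleton, mem_Icc]
      omega
    rw [h, card_insert_of_notMem (by rw [mem_Icc]; omega), Nat.card_Icc]
    omega

lemma three_le_card_bdry_add_ite_of_mem (hm : 0 < m) (hmN : m < N)
    (hX : X ∈ nonemptySector N m) :
    3 ≤ (bdry N (X ∆ Icc 1 m)).card + (if 1 ∈ X then 1 else 0) + (if N ∈ X then 1 else 0) := by
  obtain ⟨hX, hne⟩ := mem_nonemptySector_iff.mp hX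
  have hYM : X ∆ Icc 1 m ≠ Icc 1 m := fun h => hne (symmDiff_eq_right.mp h)
  have h := three_le_card_bdry_add_ite (symmDiff_Icc_subset hmN hX) (mem_sector_iff.mp hX).2 hYM
  have h1 : 1 ∈ Icc 1 m := mem_Icc.mpr ⟨le_rfl, hm⟩
  have hN : N ∉ Icc 1 m := fun h => by simp at h; omega
  simp only [mem_symmDiff, h1, hN, true_and, not_true_eq_false, not_false_eq_true, and_true,
    and_false, false_and, or_false, false_or] at h
  split_ifs at h ⊢ <;> omega

lemma four_le_lam_sub_two (hm : 0 < m) (hmN : m < N) (hA : 1 ≤ A) (hB : 1 ≤ B)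
    (hX : X ∈ nonemptySector N m) : 4 ≤ lam N m A B X - 2 := by
  have h : (3 : ℝ) ≤ _ := Nat.cast_le.mpr (three_le_card_bdry_add_ite_of_mem hm hmN hX)
  unfold lam
  split_ifs at h ⊢ <;> push_cast at h <;> linarith

lemma card_bdry_le_lam_sub_two (hm : 0 < m) (hmN : m < N) (hA : 1 ≤ A) (hB : 1 ≤ B)
    (hX : X ∈ nonemptySector N m) : ((bdry N (X ∆ Icc 1 m)).card : ℝ) ≤ lam N m A B X - 2 := by
  have h : (3 : ℝ) ≤ _ := Nat.cast_le.mpr (three_le_card_bdry_add_ite_of_mem hm hmN hX)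
  unfold lam
  split_ifs at h ⊢ <;> push_cast at h <;> linarith

end Sector

section Norm
variable {N m : ℕ} {A B : ℝ}

def wnorm (N m : ℕ) (A B : ℝ) (e : Finset ℕ → ℝ) : ℝ :=
  ∑ X ∈ nonemptySector N m, (lam N m A B X - 2) * |e X|

lemma knorm_eq (p : ℝ × (Finset ℕ → ℝ)) : knorm N m A B p = |p.1| + wnorm N m A B p.2 := rfl

lemma wnorm_nonneg (hm : 0 < m) (hmN : m < N) (hA : 1 ≤ A) (hB : 1 ≤ B)
    (e : Finset ℕ → ℝ) : 0 ≤ wnorm N m A B e :=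
  sum_nonneg fun X hX =>
    mul_nonneg (by linarith [four_le_lam_sub_two hm hmN hA hB hX]) (abs_nonneg _)

lemma four_mul_sum_abs_le_wnorm (hm : 0 < m) (hmN : m < N) (hA : 1 ≤ A) (hB : 1 ≤ B)
    (e : Finset ℕ → ℝ) : 4 * ∑ X ∈ nonemptySector N m, |e X| ≤ wnorm N m A B e := by
  rw [mul_sum]
  exact sum_le_sum fun X hX =>
    mul_le_mul_of_nonneg_right (four_le_lam_sub_two hm hmN hA hB hX) (abs_nonneg _)

lemma four_mul_abs_le_wnorm (hm : 0 < m) (hmN : m < N) (hA : 1 ≤ A) (hB : 1 ≤ B)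
    (e : Finset ℕ → ℝ) {X : Finset ℕ} (hX : X ∈ nonemptySector N m) :
    4 * |e X| ≤ wnorm N m A B e :=
  calc 4 * |e X| ≤ 4 * ∑ X ∈ nonemptySector N m, |e X| := by
        gcongr
        exact single_le_sum (f := fun X => |e X|) (fun _ _ => abs_nonneg _) hX
    _ ≤ wnorm N m A B e := four_mul_sum_abs_le_wnorm hm hmN hA hB e

lemma sum_sum_bdry_abs_symmDiff_pair_le_wnorm (hm : 0 < m) (hmN : m < N) (hA : 1 ≤ A)
    (hB : 1 ≤ B) (v : Finset ℕ → ℝ) (hv : v ∅ = 0) :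
    ∑ X ∈ nonemptySector N m, ∑ j ∈ bdry N (X ∆ Icc 1 m), |v (X ∆ {j, j + 1})|
      ≤ wnorm N m A B v := by
  have hflip : ∑ X ∈ sector N m, ∑ j ∈ bdry N (X ∆ Icc 1 m), |v (X ∆ {j, j + 1})|
      = ∑ X ∈ sector N m, ∑ j ∈ bdry N (X ∆ Icc 1 m), |v X| := by
    let flip : (_ : Finset ℕ) × ℕ → (_ : Finset ℕ) × ℕ := fun x => ⟨x.1 ∆ {x.2, x.2 + 1}, x.2⟩
    have hflip_mem : ∀ x ∈ (sector N m).sigma fun X => bdry N (X ∆ Icc 1 m),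
        flip x ∈ (sector N m).sigma fun X => bdry N (X ∆ Icc 1 m) := by
      rintro ⟨X, j⟩ hx
      rw [mem_sigma] at hx ⊢
      exact ⟨symmDiff_pair_mem_sector hx.1 hx.2, mem_bdry_symmDiff_pair_symmDiff_Icc hx.2⟩
    have hflip_flip : ∀ x, flip (flip x) = x := fun x => by simp [flip]
    rw [sum_sigma', sum_sigma']
    exact sum_nbij' flip flip hflip_mem hflip_mem (fun x _ => hflip_flip x)
      (fun x _ => hflip_flip x) fun _ _ => rfl
  calc ∑ X ∈ nonemptySector N m, ∑ j ∈ bdry N (X ∆ Icc 1 m), |v (X ∆ {j, j + 1})|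
      ≤ ∑ X ∈ sector N m, ∑ j ∈ bdry N (X ∆ Icc 1 m), |v (X ∆ {j, j + 1})| :=
        sum_le_sum_of_subset_of_nonneg (filter_subset _ _)
          fun _ _ _ => sum_nonneg fun _ _ => abs_nonneg _
    _ = ∑ X ∈ sector N m, ((bdry N (X ∆ Icc 1 m)).card : ℝ) * |v X| := by
        simp only [hflip, sum_const, nsmul_eq_mul]
    _ = ∑ X ∈ nonemptySector N m, ((bdry N (X ∆ Icc 1 m)).card : ℝ) * |v X| := by
        refine (sum_filter_of_ne fun X _ h => ?_).symm
        rintro rfl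
        simp [hv] at h
    _ ≤ wnorm N m A B v := sum_le_sum fun X hX =>
        mul_le_mul_of_nonneg_right (card_bdry_le_lam_sub_two hm hmN hA hB hX) (abs_nonneg _)

end Norm

section Estimates
variable {N m : ℕ} {ε A B : ℝ}

lemma abs_kinkF_sub_fst_le (hm : 0 < m) (hmN : m < N) (hA : 1 ≤ A) (hB : 1 ≤ B)
    (p q : ℝ × (Finset ℕ → ℝ)) :
    |(kinkF N m ε A B p - kinkF N m ε A B q).1| ≤ |ε| * wnorm N m A B (p.2 - q.2) := by
  have h := four_mul_abs_le_wnorm hm hmN hA hB (p.2 - q.2) (pair_mem_nonemptySector hm hmN)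
  calc |(kinkF N m ε A B p - kinkF N m ε A B q).1|
      = 2 * |ε| * |(p.2 - q.2) {m, m + 1}| := by
        simp only [kinkF, Prod.fst_sub, Pi.sub_apply, ← mul_sub, abs_mul, abs_two]
    _ ≤ |ε| * wnorm N m A B (p.2 - q.2) := by
        nlinarith [abs_nonneg ε, abs_nonneg ((p.2 - q.2) {m, m + 1})]

lemma kinkF_sub_snd_apply (p q : ℝ × (Finset ℕ → ℝ)) {X : Finset ℕ}
    (hX : X ∈ nonemptySector N m) :
    (kinkF N m ε A B p - kinkF N m ε A B q).2 X = (lam N m A B X - 2)⁻¹ *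
      (-2 * ε * ∑ j ∈ bdry N (X ∆ Icc 1 m), (kext p.2 - kext q.2) (X ∆ {j, j + 1})
        + (p.1 * p.2 X - q.1 * q.2 X)) := by
  simp only [kinkF, Prod.snd_sub, Pi.sub_apply, if_pos (mem_nonemptySector_iff.mp hX),
    sum_sub_distrib]
  ring

lemma lam_sub_two_mul_abs_kinkF_sub_snd_le (hm : 0 < m) (hmN : m < N) (hA : 1 ≤ A)
    (hB : 1 ≤ B) (p q : ℝ × (Finset ℕ → ℝ)) {X : Finset ℕ} (hX : X ∈ nonemptySector N m) :
    (lam N m A B X - 2) * |(kinkF N m ε A B p - kinkF N m ε A B q).2 X|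
      ≤ 2 * |ε| * ∑ j ∈ bdry N (X ∆ Icc 1 m), |(kext p.2 - kext q.2) (X ∆ {j, j + 1})|
        + (|p.1| * |(p.2 - q.2) X| + |p.1 - q.1| * |q.2 X|) := by
  have hw : 0 < lam N m A B X - 2 := by linarith [four_le_lam_sub_two hm hmN hA hB hX]
  rw [kinkF_sub_snd_apply p q hX, abs_mul, abs_inv, abs_of_pos hw, mul_inv_cancel_left₀ hw.ne']
  have hsplit : p.1 * p.2 X - q.1 * q.2 X = p.1 * (p.2 - q.2) X + (p.1 - q.1) * q.2 X := by
    simp only [Pi.sub_apply]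
    ring
  rw [hsplit]
  refine (abs_add_le _ _).trans (add_le_add ?_ ((abs_add_le _ _).trans_eq (by simp [abs_mul])))
  rw [abs_mul, abs_mul, abs_neg, abs_two]
  exact mul_le_mul_of_nonneg_left (abs_sum_le_sum_abs _ _) (by positivity)

lemma wnorm_kinkF_sub_snd_le (hm : 0 < m) (hmN : m < N) (hA : 1 ≤ A) (hB : 1 ≤ B)
    (p q : ℝ × (Finset ℕ → ℝ)) :
    wnorm N m A B (kinkF N m ε A B p - kinkF N m ε A B q).2
      ≤ 2 * |ε| * wnorm N m A B (p.2 - q.2)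
        + |p.1| * ∑ X ∈ nonemptySector N m, |(p.2 - q.2) X|
        + |p.1 - q.1| * ∑ X ∈ nonemptySector N m, |q.2 X| := by
  have hkext : wnorm N m A B (kext p.2 - kext q.2) = wnorm N m A B (p.2 - q.2) :=
    sum_congr rfl fun X hX => by simp [kext, (mem_nonemptySector_iff.mp hX).2]
  have hflip := sum_sum_bdry_abs_symmDiff_pair_le_wnorm hm hmN hA hB (kext p.2 - kext q.2)
    (by simp [kext])
  calc wnorm N m A B (kinkF N m ε A B p - kinkF N m ε A B q).2
      ≤ ∑ X ∈ nonemptySector N m,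
          (2 * |ε| * ∑ j ∈ bdry N (X ∆ Icc 1 m), |(kext p.2 - kext q.2) (X ∆ {j, j + 1})|
            + (|p.1| * |(p.2 - q.2) X| + |p.1 - q.1| * |q.2 X|)) :=
        sum_le_sum fun X hX => lam_sub_two_mul_abs_kinkF_sub_snd_le hm hmN hA hB p q hX
    _ = 2 * |ε| * ∑ X ∈ nonemptySector N m, ∑ j ∈ bdry N (X ∆ Icc 1 m),
            |(kext p.2 - kext q.2) (X ∆ {j, j + 1})|
          + |p.1| * ∑ X ∈ nonemptySector N m, |(p.2 - q.2) X|
          + |p.1 - q.1| * ∑ X ∈ nonemptySector N m, |q.2 X| := by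
        rw [sum_add_distrib, sum_add_distrib, mul_sum, mul_sum, mul_sum, add_assoc]
    _ ≤ _ := by
        rw [← hkext]
        gcongr

theorem knorm_kinkF_sub_le (hm : 0 < m) (hmN : m < N) (hA : 1 ≤ A) (hB : 1 ≤ B)
    (p q : ℝ × (Finset ℕ → ℝ)) :
    knorm N m A B (kinkF N m ε A B p - kinkF N m ε A B q)
      ≤ (3 * |ε| + 1 / 4 * max (knorm N m A B p) (knorm N m A B q)) * knorm N m A B (p - q) := by
  set K := max (knorm N m A B p) (knorm N m A B q)
  have hpK : |p.1| ≤ K :=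
    (le_add_of_nonneg_right (wnorm_nonneg hm hmN hA hB _)).trans (le_max_left _ _)
  have hqK : wnorm N m A B q.2 ≤ K :=
    (le_add_of_nonneg_left (abs_nonneg _)).trans (le_max_right _ _)
  have hd := four_mul_sum_abs_le_wnorm hm hmN hA hB (p.2 - q.2)
  have hq := four_mul_sum_abs_le_wnorm hm hmN hA hB q.2
  have hd₀ := wnorm_nonneg hm hmN hA hB (p.2 - q.2)
  rw [knorm_eq, knorm_eq, Prod.fst_sub, Prod.snd_sub]
  calc |(kinkF N m ε A B p - kinkF N m ε A B q).1|
        + wnorm N m A B (kinkF N m ε A B p - kinkF N m ε A B q).2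
      ≤ 3 * |ε| * wnorm N m A B (p.2 - q.2) + |p.1| * (wnorm N m A B (p.2 - q.2) / 4)
        + |p.1 - q.1| * (wnorm N m A B q.2 / 4) := by
        have hfst := abs_kinkF_sub_fst_le (ε := ε) hm hmN hA hB p q
        have hsnd := wnorm_kinkF_sub_snd_le (ε := ε) hm hmN hA hB p q
        have hp : |p.1| * ∑ X ∈ nonemptySector N m, |(p.2 - q.2) X|
            ≤ |p.1| * (wnorm N m A B (p.2 - q.2) / 4) := by gcongr; linarith
        have hq : |p.1 - q.1| * ∑ X ∈ nonemptySector N m, |q.2 X|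
            ≤ |p.1 - q.1| * (wnorm N m A B q.2 / 4) := by gcongr; linarith
        linarith
    _ ≤ 3 * |ε| * wnorm N m A B (p.2 - q.2) + K * (wnorm N m A B (p.2 - q.2) / 4)
        + |p.1 - q.1| * (K / 4) := by gcongr
    _ ≤ (3 * |ε| + 1 / 4 * K) * (|p.1 - q.1| + wnorm N m A B (p.2 - q.2)) := by
        nlinarith [mul_nonneg (abs_nonneg ε) (abs_nonneg (p.1 - q.1))]

end Estimates

theorem kinkF_contraction (N m : ℕ) (hm : 0 < m) (hmN : m < N)
    (ε A B : ℝ) (hA : 1 ≤ A) (hB : 1 ≤ B) :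
    (∀ p q : ℝ × (Finset ℕ → ℝ),
        knorm N m A B (kinkF N m ε A B p - kinkF N m ε A B q)
          ≤ (3 * |ε| + (1 / 4) * max (knorm N m A B p) (knorm N m A B q))
              * knorm N m A B (p - q)) ∧
      ∀ δ : ℝ, 0 < δ → 3 * |ε| + δ / 4 < 1 →
        ∀ p q : ℝ × (Finset ℕ → ℝ), knorm N m A B p ≤ δ → knorm N m A B q ≤ δ →
          knorm N m A B (kinkF N m ε A B p - kinkF N m ε A B q)
            ≤ (3 * |ε| + δ / 4) * knorm N m A B (p - q) := by
  refine ⟨knorm_kinkF_sub_le hm hmN hA hB, fun δ _ _ p q hp hq => ?_⟩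
  have hK : max (knorm N m A B p) (knorm N m A B q) ≤ δ := max_le hp hq
  have hpq : 0 ≤ knorm N m A B (p - q) := add_nonneg (abs_nonneg _) (wnorm_nonneg hm hmN hA hB _)
  refine (knorm_kinkF_sub_le hm hmN hA hB p q).trans ?_
  gcongr
  linarith
end
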